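/- If M is a complete, separable, finitely injective metric space, then every separable metric space admits an isometric embedding into M. -/
import Mathlib


/-- A metric space `M` is finitely injective if every distance-preserving map
from a subspace of a finite metric space into `M` extends to a
distance-preserving map of the whole finite space. -/
def FinitelyInjective (M : Type*) [MetricSpace M] : Prop :=
  ∀ (L : Type) (_ : MetricSpace L) (_ : Finite L) (K : Set L) (f : K → M),
    Isometry f → ∃ g : L → M, Isometry g ∧ ∀ x : K, g x = f x

lemma FI.nonempty {M : Type*} [MetricSpace M] (hM : FinitelyInjective M) : Nonempty M := by
  obtain ⟨g, -, -⟩ := hM PUnit inferInstance inferInstance ∅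
    (fun k => absurd k.2 (Set.notMem_empty _))
    (fun k => absurd k.2 (Set.notMem_empty _))
  exact ⟨g PUnit.unit⟩

lemma FI.step {M : Type*} [MetricSpace M] (hM : FinitelyInjective M)
    {X : Type} [MetricSpace X] (x : ℕ → X) (n : ℕ)
    (v : Fin (n+1) → M) (hv : ∀ i j, dist (v i) (v j) = dist (x i) (x j)) :
    ∃ w : Fin (n+2) → M, (∀ i j : Fin (n+2), dist (w i) (w j) = dist (x i) (x j)) ∧
      ∀ i : Fin (n+1), w i.castSucc = v i := by
  classical
  set S : Set X := x '' {i | i < n + 2} with hS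
  have hfin : S.Finite := Set.Finite.image _ (Set.finite_Iio _)
  haveI : Finite S := hfin.to_subtype
  set K : Set S := {l | (l : X) ∈ x '' {i | i < n + 1}} with hK
  have hmemS : ∀ i : ℕ, i < n + 2 → x i ∈ S := fun i hi => ⟨i, hi, rfl⟩
  have hidx : ∀ k : K, ∃ i : Fin (n+1), x i = ((k : S) : X) := by
    rintro ⟨⟨y, hy⟩, ⟨i, hi, hxi⟩⟩
    exact ⟨⟨i, hi⟩, hxi⟩
  set f : K → M := fun k => v (hidx k).choose with hf
  have hfx : ∀ k : K, x ((hidx k).choose : ℕ) = ((k : S) : X) := fun k => (hidx k).choose_spec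
  have hveq : ∀ (i j : Fin (n+1)), x i = x j → v i = v j := by
    intro i j h
    have h2 := hv i j
    rw [h, dist_self] at h2
    exact dist_le_zero.mp h2.le
  have hfiso : Isometry f := by
    apply Isometry.of_dist_eq
    intro a b
    rw [hf]
    simp only
    rw [hv, hfx a, hfx b, Subtype.dist_eq, Subtype.dist_eq]
  obtain ⟨g, hgiso, hgf⟩ := hM S inferInstance inferInstance K f hfiso
  refine ⟨fun i => g ⟨x i, hmemS i i.isLt⟩, ?_, ?_⟩
  · intro i j
    rw [hgiso.dist_eq, Subtype.dist_eq]
  · intro i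
    have hkmem : (⟨x (i.castSucc : ℕ), hmemS _ (i.castSucc).isLt⟩ : S) ∈ K :=
      ⟨i, i.isLt, by simp⟩
    have h3 := hgf ⟨_, hkmem⟩
    show g ⟨x (i.castSucc : ℕ), hmemS _ (i.castSucc).isLt⟩ = v i
    rw [h3, hf]
    exact hveq _ _ (by rw [hfx]; simp)

lemma FI.seq {M : Type*} [MetricSpace M] (hM : FinitelyInjective M)
    {X : Type} [MetricSpace X] (x : ℕ → X) :
    ∃ g : ℕ → M, ∀ i j, dist (g i) (g j) = dist (x i) (x j) := by
  classical
  obtain ⟨m₀⟩ := FI.nonempty hM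
  let F : (n : ℕ) → {v : Fin (n+1) → M // ∀ i j, dist (v i) (v j) = dist (x i) (x j)} :=
    Nat.rec
      ⟨fun _ => m₀, by
        rintro ⟨i, hi⟩ ⟨j, hj⟩
        obtain rfl : i = 0 := Nat.lt_one_iff.mp hi
        obtain rfl : j = 0 := Nat.lt_one_iff.mp hj
        rw [dist_self, dist_self]⟩
      (fun n p => ⟨(FI.step hM x n p.1 p.2).choose, (FI.step hM x n p.1 p.2).choose_spec.1⟩)
  have hcompat : ∀ n (i : Fin (n+1)), (F (n+1)).1 i.castSucc = (F n).1 i :=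
    fun n i => (FI.step hM x n (F n).1 (F n).2).choose_spec.2 i
  set g : ℕ → M := fun n => (F n).1 (Fin.last n) with hg
  have key : ∀ n (i : Fin (n+1)), (F n).1 i = g i := by
    intro n
    induction n with
    | zero =>
      rintro ⟨i, hi⟩
      obtain rfl : i = 0 := Nat.lt_one_iff.mp hi
      rfl
    | succ n ih =>
      intro i
      refine Fin.lastCases ?_ ?_ i
      · rfl
      · intro j
        rw [hcompat n j, ih j, Fin.coe_castSucc]
  have main : ∀ i j : ℕ, i ≤ j → dist (g i) (g j) = dist (x i) (x j) := by
    intro i j h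
    have h2 := (F j).2 ⟨i, by omega⟩ (Fin.last j)
    rw [key, key] at h2
    simpa using h2
  refine ⟨g, fun i j => ?_⟩
  rcases le_total i j with h | h
  · exact main i j h
  · rw [dist_comm, dist_comm (x i)]
    exact main j i h

theorem stmt1 (M : Type*) [MetricSpace M] [CompleteSpace M]
    [TopologicalSpace.SeparableSpace M] (hM : FinitelyInjective M)
    (X : Type) [MetricSpace X] [TopologicalSpace.SeparableSpace X] :
    ∃ f : X → M, Isometry f := by
  classical
  rcases isEmpty_or_nonempty X with hX | hX
  · exact ⟨fun x => isEmptyElim x, fun x => isEmptyElim x⟩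
  obtain ⟨x, hx⟩ := TopologicalSpace.exists_dense_seq X
  obtain ⟨g, hg⟩ := FI.seq hM x
  have happrox : ∀ (y : X) (m : ℕ), ∃ n, dist y (x n) < 1 / (m + 1) :=
    fun y m => Metric.denseRange_iff.mp hx y _ (by positivity)
  choose k hk using happrox
  have hxk : ∀ y : X, Filter.Tendsto (fun m => x (k y m)) Filter.atTop (nhds y) := by
    intro y
    rw [tendsto_iff_dist_tendsto_zero]
    refine squeeze_zero (fun m => dist_nonneg) (fun m => ?_)
      tendsto_one_div_add_atTop_nhds_zero_nat
    rw [dist_comm]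
    exact (hk y m).le
  have hcauchy : ∀ y : X, CauchySeq (fun m => g (k y m)) := by
    intro y
    have h1 : CauchySeq (fun m => x (k y m)) := (hxk y).cauchySeq
    rw [Metric.cauchySeq_iff] at h1 ⊢
    intro ε hε
    obtain ⟨N, hN⟩ := h1 ε hε
    exact ⟨N, fun a ha b hb => by rw [hg]; exact hN a ha b hb⟩
  have hlim : ∀ y : X, ∃ l : M, Filter.Tendsto (fun m => g (k y m)) Filter.atTop (nhds l) :=
    fun y => cauchySeq_tendsto_of_complete (hcauchy y)
  choose f hf using hlim
  refine ⟨f, Isometry.of_dist_eq fun y y' => ?_⟩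
  have t1 : Filter.Tendsto (fun m => dist (g (k y m)) (g (k y' m))) Filter.atTop
      (nhds (dist (f y) (f y'))) := (hf y).dist (hf y')
  have t2 : Filter.Tendsto (fun m => dist (g (k y m)) (g (k y' m))) Filter.atTop
      (nhds (dist y y')) := by
    have h2 := (hxk y).dist (hxk y')
    simpa only [hg] using h2
  exact tendsto_nhds_unique t1 t2
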